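/- Given a long exact sequence of filtered vector spaces ⋯ → A^{k−1} → B^{k−1} → C^k → A^k → B^k → ⋯ that is strictly compatible with filtrations W_•, if each A^k is pure of weight k (i.e. W_{k−1}A^k = 0 and W_kA^k = A^k) and each B^k has weights in {0,…,k}, then for j ≤ k−2 the map B^{k−1} → C^k induces an isomorphism W_jB^{k−1} ≅ W_jC^k. -/
import Mathlib


/-!
**Statement 10.**  Given a long exact sequence of filtered finite-dimensional
`ℚ`-vector spaces `⋯ → A^{k-1} → B^{k-1} → C^k → A^k → B^k → ⋯` that is strictly
compatible with the filtrations `W_•`, if each `A^k` is pure of weight `k` and each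
`B^k` has weights in `{0, …, k}`, then for `j ≤ k - 2` the map `B^{k-1} → C^k` induces
an isomorphism `W_j B^{k-1} ≅ W_j C^k`.

We index the sequence by `k : ℕ`, with maps `f k : A k → B k`, `g k : B k → C (k+1)`
and `h k : C k → A k`; so the claim about `B^{k-1} → C^k` for `j ≤ k - 2` becomes the
claim about `g k : B k → C (k+1)` for `j ≤ k - 1`.  Strict compatibility of a map `φ`
means `φ(W_j) = im φ ∩ W_j`; purity of `A^k` of weight `k` means `W_j A^k = 0` for
`j < k` and `W_j A^k = A^k` for `j ≥ k`; "weights in `{0,…,k}`" for `B^k` means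
`W_j B^k = 0` for `j < 0` and `W_j B^k = B^k` for `j ≥ k`.  The induced isomorphism
`W_j B^k ≅ W_j C^{k+1}` is expressed by unique lifting: every `y ∈ W_j C^{k+1}` is the
image of a unique `x ∈ W_j B^k`.
-/

theorem strict_les_low_weight_iso
    (A B C : ℕ → Type)
    [∀ k, AddCommGroup (A k)] [∀ k, Module ℚ (A k)] [∀ k, FiniteDimensional ℚ (A k)]
    [∀ k, AddCommGroup (B k)] [∀ k, Module ℚ (B k)] [∀ k, FiniteDimensional ℚ (B k)]
    [∀ k, AddCommGroup (C k)] [∀ k, Module ℚ (C k)] [∀ k, FiniteDimensional ℚ (C k)]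
    (f : ∀ k, A k →ₗ[ℚ] B k) (g : ∀ k, B k →ₗ[ℚ] C (k + 1)) (h : ∀ k, C k →ₗ[ℚ] A k)
    -- exactness of the long sequence
    (hexB : ∀ k, Function.Exact (f k) (g k))
    (hexC : ∀ k, Function.Exact (g k) (h (k + 1)))
    (hexA : ∀ k, Function.Exact (h k) (f k))
    -- the filtrations
    (WA : ∀ k, ℤ → Submodule ℚ (A k)) (WB : ∀ k, ℤ → Submodule ℚ (B k))
    (WC : ∀ k, ℤ → Submodule ℚ (C k))
    (hWA : ∀ k, Monotone (WA k)) (hWB : ∀ k, Monotone (WB k)) (hWC : ∀ k, Monotone (WC k))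
    -- strict compatibility of the maps with the filtrations
    (hf : ∀ k j, (WA k j).map (f k) = LinearMap.range (f k) ⊓ WB k j)
    (hg : ∀ k j, (WB k j).map (g k) = LinearMap.range (g k) ⊓ WC (k + 1) j)
    (hh : ∀ k j, (WC k j).map (h k) = LinearMap.range (h k) ⊓ WA k j)
    -- each `A^k` is pure of weight `k`
    (hpure : ∀ (k : ℕ) (j : ℤ), (j < (k : ℤ) → WA k j = ⊥) ∧ ((k : ℤ) ≤ j → WA k j = ⊤))
    -- each `B^k` has weights in `{0, …, k}`
    (hBwts : ∀ (k : ℕ) (j : ℤ), (j < 0 → WB k j = ⊥) ∧ ((k : ℤ) ≤ j → WB k j = ⊤)) :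
    ∀ (k : ℕ) (j : ℤ), j ≤ (k : ℤ) - 1 →
      ∀ y : C (k + 1), y ∈ WC (k + 1) j →
        ∃! x : B k, x ∈ WB k j ∧ g k x = y := by
  intro k j hjk y hy
  have hAk1 : WA (k + 1) j = ⊥ := (hpure (k + 1) j).1 (by push_cast; omega)
  have hAk : WA k j = ⊥ := (hpure k j).1 (by omega)
  -- h (k+1) y = 0
  have hmem : h (k + 1) y ∈ (WC (k + 1) j).map (h (k + 1)) := ⟨y, hy, rfl⟩
  rw [hh (k + 1) j, hAk1] at hmem
  have hy0 : h (k + 1) y = 0 := by simpa using hmem.2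
  -- y is in the image of g k
  have hrange : y ∈ Set.range (g k) := (hexC k y).mp hy0
  obtain ⟨x0, hx0⟩ := hrange
  have hymem : y ∈ (WB k j).map (g k) := by
    rw [hg k j]
    exact ⟨⟨x0, hx0⟩, hy⟩
  obtain ⟨x, hxW, hxy⟩ := hymem
  refine ⟨x, ⟨hxW, hxy⟩, ?_⟩
  rintro x' ⟨hx'W, hx'y⟩
  have hdiff : g k (x' - x) = 0 := by
    rw [map_sub, hxy, hx'y, sub_self]
  have hdrange : x' - x ∈ Set.range (f k) := (hexB k (x' - x)).mp hdiff
  obtain ⟨a, ha⟩ := hdrange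
  have hdmem : x' - x ∈ (WA k j).map (f k) := by
    rw [hf k j]
    exact ⟨⟨a, ha⟩, (WB k j).sub_mem hx'W hxW⟩
  rw [hAk] at hdmem
  have : x' - x = 0 := by simpa using hdmem
  exact sub_eq_zero.mp this
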